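/- arXiv:1107.3238 — 2 statements merged into one kernel-verified Lean document; each statement's English description precedes it below -/
import Mathlib

section
/- Let (X₀,X₁) be a positive Calderón couple of Banach lattices of measurable functions on a common measure space (Ω,Σ,μ), and suppose that X₀ and X₁ are both complete lattices (i.e., have the Least Upper Bound Property). Then for every p ∈ (1,∞), the couple of p-convexifications (X₀^(p), X₁^(p)) is a Calderón couple. -/
open MeasureTheory

/-- A Banach lattice of (a.e.-equivalence classes of) real-valued measurable
functions on a measure space `(Ω, μ)`: a linear subspace of `Ω →ₘ[μ] ℝ` with a complete
norm satisfying the lattice (ideal) property. -/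
structure BanachFunctionLattice (Ω : Type*) [MeasurableSpace Ω] (μ : MeasureTheory.Measure Ω) where
  carrier : Set (Ω →ₘ[μ] ℝ)
  norm : (Ω →ₘ[μ] ℝ) → ℝ
  zero_mem : 0 ∈ carrier
  add_mem : ∀ {f g}, f ∈ carrier → g ∈ carrier → f + g ∈ carrier
  smul_mem : ∀ (c : ℝ) {f}, f ∈ carrier → c • f ∈ carrier
  norm_nonneg : ∀ f ∈ carrier, 0 ≤ norm f
  norm_eq_zero_iff : ∀ f ∈ carrier, (norm f = 0 ↔ f = 0)
  norm_add_le : ∀ f ∈ carrier, ∀ g ∈ carrier, norm (f + g) ≤ norm f + norm g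
  norm_smul : ∀ (c : ℝ), ∀ f ∈ carrier, norm (c • f) = |c| * norm f
  ideal_mem : ∀ f ∈ carrier, ∀ g : (Ω →ₘ[μ] ℝ), |g| ≤ |f| → g ∈ carrier
  ideal_norm_le : ∀ f ∈ carrier, ∀ g : (Ω →ₘ[μ] ℝ), |g| ≤ |f| → norm g ≤ norm f
  complete : ∀ u : ℕ → (Ω →ₘ[μ] ℝ), (∀ n, u n ∈ carrier) →
    (∀ ε > 0, ∃ N, ∀ m ≥ N, ∀ n ≥ N, norm (u m - u n) < ε) →
    ∃ f ∈ carrier, ∀ ε > 0, ∃ N, ∀ n ≥ N, norm (u n - f) < ε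

variable {Ω : Type*} [MeasurableSpace Ω] {μ : MeasureTheory.Measure Ω}

/-- The a.e.-equivalence class of `ω ↦ |f ω| ^ p` (real power). -/
noncomputable def absRpow (p : ℝ) (f : Ω →ₘ[μ] ℝ) : Ω →ₘ[μ] ℝ :=
  AEEqFun.mk (fun ω => |f ω| ^ p)
    (((by measurability : Measurable fun x : ℝ => |x| ^ p).comp_aemeasurable
      f.aemeasurable).aestronglyMeasurable)

/-- A (not necessarily complete) normed function space: the data of a carrier and a norm.
Used to speak about `p`-convexifications without re-proving all the axioms. -/
structure FunctionSpace (Ω : Type*) [MeasurableSpace Ω] (μ : MeasureTheory.Measure Ω) where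
  carrier : Set (Ω →ₘ[μ] ℝ)
  norm : (Ω →ₘ[μ] ℝ) → ℝ

/-- The carrier-and-norm data underlying a Banach function lattice. -/
def BanachFunctionLattice.toFunctionSpace (X : BanachFunctionLattice Ω μ) :
    FunctionSpace Ω μ := ⟨X.carrier, X.norm⟩

/-- The `p`-convexification `X^(p)`: all `f` with `|f|^p ∈ X`, with norm `‖|f|^p‖_X^(1/p)`. -/
noncomputable def pConv (X : BanachFunctionLattice Ω μ) (p : ℝ) : FunctionSpace Ω μ where
  carrier := {f | absRpow p f ∈ X.carrier}
  norm := fun f => (X.norm (absRpow p f)) ^ (1 / p)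

/-- The sum space `X₀ + X₁` (as a set). -/
def sumSet (A₀ A₁ : FunctionSpace Ω μ) : Set (Ω →ₘ[μ] ℝ) :=
  {f | ∃ a₀ ∈ A₀.carrier, ∃ a₁ ∈ A₁.carrier, f = a₀ + a₁}

/-- The Peetre `K`-functional `K(t, f; A₀, A₁)`. -/
noncomputable def Kfun (A₀ A₁ : FunctionSpace Ω μ) (t : ℝ) (f : Ω →ₘ[μ] ℝ) : ℝ :=
  sInf {r | ∃ a₀ ∈ A₀.carrier, ∃ a₁ ∈ A₁.carrier,
    f = a₀ + a₁ ∧ r = A₀.norm a₀ + t * A₁.norm a₁}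

/-- The norm of the sum space `X₀ + X₁`, namely `K(1, ·)`. -/
noncomputable def sumNorm (A₀ A₁ : FunctionSpace Ω μ) (f : Ω →ₘ[μ] ℝ) : ℝ :=
  Kfun A₀ A₁ 1 f

/-- The functional `D(t, f; A₀, A₁)`, the analogue of the `K`-functional restricted to
disjointly supported decompositions. -/
noncomputable def Dfun (A₀ A₁ : FunctionSpace Ω μ) (t : ℝ) (f : Ω →ₘ[μ] ℝ) : ℝ :=
  sInf {r | ∃ a₀ ∈ A₀.carrier, ∃ a₁ ∈ A₁.carrier,
    f = a₀ + a₁ ∧ a₀ * a₁ = 0 ∧ r = A₀.norm a₀ + t * A₁.norm a₁}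

/-- `T : (A₀, A₁) → (A₀, A₁)` is a bounded linear operator: `T` is linear on `A₀ + A₁`
and its restriction to each `Aⱼ` is a bounded operator from `Aⱼ` into itself. -/
def IsBoundedCoupleOperator (A₀ A₁ : FunctionSpace Ω μ) (T : (Ω →ₘ[μ] ℝ) → (Ω →ₘ[μ] ℝ)) :
    Prop :=
  (∀ f ∈ sumSet A₀ A₁, ∀ g ∈ sumSet A₀ A₁, T (f + g) = T f + T g) ∧
  (∀ (c : ℝ), ∀ f ∈ sumSet A₀ A₁, T (c • f) = c • T f) ∧
  (∀ f ∈ A₀.carrier, T f ∈ A₀.carrier) ∧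
  (∀ f ∈ A₁.carrier, T f ∈ A₁.carrier) ∧
  (∃ C₀ : ℝ, ∀ f ∈ A₀.carrier, A₀.norm (T f) ≤ C₀ * A₀.norm f) ∧
  (∃ C₁ : ℝ, ∀ f ∈ A₁.carrier, A₁.norm (T f) ≤ C₁ * A₁.norm f)

/-- `‖T‖_{Aⱼ → Aⱼ} ≤ C` for `j = 0, 1`. -/
def CoupleOperatorNormLE (A₀ A₁ : FunctionSpace Ω μ) (T : (Ω →ₘ[μ] ℝ) → (Ω →ₘ[μ] ℝ))
    (C : ℝ) : Prop :=
  (∀ f ∈ A₀.carrier, A₀.norm (T f) ≤ C * A₀.norm f) ∧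
  (∀ f ∈ A₁.carrier, A₁.norm (T f) ≤ C * A₁.norm f)

/-- `T` is a positive operator on `A₀ + A₁`. -/
def IsPositiveOn (A₀ A₁ : FunctionSpace Ω μ) (T : (Ω →ₘ[μ] ℝ) → (Ω →ₘ[μ] ℝ)) : Prop :=
  ∀ h ∈ sumSet A₀ A₁, 0 ≤ h → 0 ≤ T h

/-- `(A₀, A₁)` is a Calderón couple. -/
def IsCalderonCouple (A₀ A₁ : FunctionSpace Ω μ) : Prop :=
  ∀ f ∈ sumSet A₀ A₁, ∀ g ∈ sumSet A₀ A₁,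
    (∀ t > 0, Kfun A₀ A₁ t g ≤ Kfun A₀ A₁ t f) →
    ∃ T, IsBoundedCoupleOperator A₀ A₁ T ∧ T f = g

/-- `(A₀, A₁)` is a `C`-Calderón couple. -/
def IsCCalderonCouple (A₀ A₁ : FunctionSpace Ω μ) (C : ℝ) : Prop :=
  ∀ f ∈ sumSet A₀ A₁, ∀ g ∈ sumSet A₀ A₁,
    (∀ t > 0, Kfun A₀ A₁ t g ≤ Kfun A₀ A₁ t f) →
    ∃ T, IsBoundedCoupleOperator A₀ A₁ T ∧ T f = g ∧ CoupleOperatorNormLE A₀ A₁ T C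

/-- `(A₀, A₁)` is a positive Calderón couple. -/
def IsPositiveCalderonCouple (A₀ A₁ : FunctionSpace Ω μ) : Prop :=
  ∀ f ∈ sumSet A₀ A₁, ∀ g ∈ sumSet A₀ A₁, 0 ≤ f → 0 ≤ g →
    (∀ t > 0, Kfun A₀ A₁ t g ≤ Kfun A₀ A₁ t f) →
    ∃ T, IsBoundedCoupleOperator A₀ A₁ T ∧ IsPositiveOn A₀ A₁ T ∧ T f = g

/-- `(A₀, A₁)` is a positive `C`-Calderón couple. -/
def IsPositiveCCalderonCouple (A₀ A₁ : FunctionSpace Ω μ) (C : ℝ) : Prop :=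
  ∀ f ∈ sumSet A₀ A₁, ∀ g ∈ sumSet A₀ A₁, 0 ≤ f → 0 ≤ g →
    (∀ t > 0, Kfun A₀ A₁ t g ≤ Kfun A₀ A₁ t f) →
    ∃ T, IsBoundedCoupleOperator A₀ A₁ T ∧ IsPositiveOn A₀ A₁ T ∧ T f = g ∧
      CoupleOperatorNormLE A₀ A₁ T C

/-- A set `S` of (classes of) measurable functions has the Least Upper Bound Property:
every nonempty subset of `S` bounded above by an element of `S` has a least upper bound
in `S` (for the a.e. pointwise order). -/
def HasLUBP (S : Set (Ω →ₘ[μ] ℝ)) : Prop :=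
  ∀ A ⊆ S, A.Nonempty → (∃ b ∈ S, ∀ a ∈ A, a ≤ b) →
    ∃ y ∈ S, (∀ a ∈ A, a ≤ y) ∧ ∀ z ∈ S, (∀ a ∈ A, a ≤ z) → y ≤ z


/-!
Put `F = |f|^p` and `G = |g|^p`. Decompositions of `f` in `X₀^(p) + X₁^(p)` and of `F` in
`X₀ + X₁` correspond to each other up to constants, so `K(t^(1/p), f; X₀^(p), X₁^(p))^p` is
equivalent to `K(t, F; X₀, X₁)`, and the hypothesis on `f, g` gives `K(t, G) ≤ c K(t, F)`. The
positive Calderón property then yields a positive operator `S` on `(X₀, X₁)` with `S F = G`. The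
operator `T h = sgn g |g|^(1-p) S(sgn f |f|^(p-1) h)` maps `f` to `g`. As
`|sgn f |f|^(p-1) h| = F^(1-1/p) H^(1/p)` with `H = |h|^p`, Hölder's inequality for the positive
operator `S` gives `|T h|^p ≤ 3^p S H`, so `T` is bounded on both `Xⱼ^(p)`.
-/

namespace Real

variable {p x y z : ℝ}

lemma abs_add_rpow_le (hp : 1 ≤ p) (a b : ℝ) : |a + b| ^ p ≤ 2 ^ (p - 1) * (|a| ^ p + |b| ^ p) := by
  calc |a + b| ^ p ≤ (|a| + |b|) ^ p :=
        rpow_le_rpow (abs_nonneg _) (abs_add_le a b) (by linarith)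
    _ ≤ 2 ^ (p - 1) * (|a| ^ p + |b| ^ p) := by
        have := NNReal.rpow_add_le_mul_rpow_add_rpow ⟨|a|, abs_nonneg a⟩ ⟨|b|, abs_nonneg b⟩ hp
        exact_mod_cast this

lemma abs_max_min_le {a : ℝ} (ha : 0 ≤ a) (x : ℝ) : |max (min x a) (-a)| ≤ a := by
  rw [abs_le]; constructor <;> grind

lemma abs_sub_max_min_le {a b : ℝ} (ha : 0 ≤ a) (hb : 0 ≤ b) (h : |x| ≤ a + b) :
    |x - max (min x a) (-a)| ≤ b := by
  rw [abs_le] at h ⊢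
  constructor <;> grind

lemma rpow_one_sub_mul_rpow_le_one (hx : 0 ≤ x) (p : ℝ) : x ^ (1 - p) * x ^ (p - 1) ≤ 1 := by
  rcases hx.eq_or_lt with rfl | hx
  · rcases eq_or_ne p 1 with rfl | hp
    · simp
    · rw [zero_rpow (sub_ne_zero.2 hp.symm), zero_mul]; exact zero_le_one
  · rw [← rpow_add hx]; simp

lemma abs_mul_abs_rpow_sub_one {r : ℝ} (hr : r ≠ 0) (x : ℝ) : |x * |x| ^ (r - 1)| = |x| ^ r := by
  rcases eq_or_ne x 0 with rfl | hx
  · simp [zero_rpow hr]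
  · have hx' : 0 < |x| := abs_pos.2 hx
    rw [abs_mul, abs_of_nonneg (rpow_nonneg hx'.le _), rpow_sub_one hx'.ne']
    field_simp

lemma rpow_mul_rpow_le_mul_add_rpow_mul (hp : 1 < p) (hx : 0 ≤ x) (hy : 0 ≤ y) {θ : ℝ}
    (hθ : 0 < θ) : x ^ (1 - 1 / p) * y ^ (1 / p) ≤ θ * x + θ ^ (1 - p) * y := by
  have hp0 : 0 < p := by linarith
  have hw₁ : 0 ≤ 1 - 1 / p := by rw [sub_nonneg, div_le_one hp0]; exact hp.le
  have hw₂ : 0 ≤ 1 / p := by positivity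
  have hθp : 0 ≤ θ ^ (1 - p) := rpow_nonneg hθ.le _
  have hcancel : θ ^ (1 - 1 / p) * (θ ^ (1 - p)) ^ (1 / p) = 1 := by
    rw [← rpow_mul hθ.le, ← rpow_add hθ]
    convert rpow_zero θ using 2
    field_simp
    ring
  have key := geom_mean_le_arith_mean2_weighted hw₁ hw₂ (mul_nonneg hθ.le hx) (mul_nonneg hθp hy)
    (by ring)
  rw [mul_rpow hθ.le hx, mul_rpow hθp hy] at key
  calc x ^ (1 - 1 / p) * y ^ (1 / p)
      = θ ^ (1 - 1 / p) * x ^ (1 - 1 / p) * ((θ ^ (1 - p)) ^ (1 / p) * y ^ (1 / p)) := by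
        linear_combination (x ^ (1 - 1 / p) * y ^ (1 / p)) * hcancel.symm
    _ ≤ (1 - 1 / p) * (θ * x) + 1 / p * (θ ^ (1 - p) * y) := key
    _ ≤ θ * x + θ ^ (1 - p) * y := by
        have : 0 ≤ θ * x := by positivity
        have : 0 ≤ θ ^ (1 - p) * y := by positivity
        nlinarith

/-- Choosing `θ ∈ (R / x, 2 R / x)` rational, where `R = x ^ (1 - 1/p) * y ^ (1/p)`, makes both
terms of the bound at most `2 R`. -/
lemma le_three_mul_rpow_mul_rpow_of_pos (hp : 1 < p) (hx : 0 < x) (hy : 0 < y)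
    (h : ∀ q : ℚ, 0 < q → z ≤ q * x + (q : ℝ) ^ (1 - p) * y) :
    z ≤ 3 * (x ^ (1 - 1 / p) * y ^ (1 / p)) := by
  have hp0 : 0 < p := by linarith
  set R := x ^ (1 - 1 / p) * y ^ (1 / p) with hR
  have hR0 : 0 < R := by positivity
  have hRp : R ^ p = x ^ (p - 1) * y := by
    rw [hR, mul_rpow (by positivity) (by positivity), ← rpow_mul hx.le, ← rpow_mul hy.le,
      one_div, inv_mul_cancel₀ hp0.ne', rpow_one]
    congr 2
    field_simp
  set θ := R / x
  have hθ : 0 < θ := by positivity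
  have hθy : θ ^ (1 - p) * y = R := by
    rw [div_rpow hR0.le hx.le, show 1 - p = -(p - 1) by ring, rpow_neg hx.le, div_inv_eq_mul,
      rpow_neg hR0.le, mul_assoc, ← hRp, rpow_sub_one hR0.ne']
    field_simp
  obtain ⟨q, hθq, hq2θ⟩ := exists_rat_btwn (show θ < 2 * θ by linarith)
  have hq : (0 : ℝ) < q := hθ.trans hθq
  calc z ≤ q * x + (q : ℝ) ^ (1 - p) * y := h q (Rat.cast_pos.1 hq)
    _ ≤ 2 * θ * x + θ ^ (1 - p) * y :=
        add_le_add (mul_le_mul_of_nonneg_right hq2θ.le hx.le)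
          (mul_le_mul_of_nonneg_right (rpow_le_rpow_of_nonpos hθ hθq.le (by linarith)) hy.le)
    _ = 3 * R := by rw [hθy, mul_assoc, div_mul_cancel₀ R hx.ne']; ring

lemma le_three_mul_rpow_mul_rpow (hp : 1 < p) (hx : 0 ≤ x) (hy : 0 ≤ y)
    (h : ∀ q : ℚ, 0 < q → z ≤ q * x + (q : ℝ) ^ (1 - p) * y) :
    z ≤ 3 * (x ^ (1 - 1 / p) * y ^ (1 / p)) := by
  have hw₁ : 0 ≤ 1 - 1 / p := by rw [sub_nonneg, div_le_one (by linarith)]; exact hp.le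
  have hw₂ : 0 ≤ 1 / p := one_div_nonneg.2 (by linarith)
  have hε : ∀ ε > 0, z ≤ 3 * ((x + ε) ^ (1 - 1 / p) * (y + ε) ^ (1 / p)) := fun ε hε ↦
    le_three_mul_rpow_mul_rpow_of_pos hp (by linarith) (by linarith) fun q hq ↦ (h q hq).trans <| by
      have : (0 : ℝ) < q := Rat.cast_pos.2 hq
      gcongr <;> linarith
  have hcont : Continuous fun ε : ℝ ↦ 3 * ((x + ε) ^ (1 - 1 / p) * (y + ε) ^ (1 / p)) :=
    continuous_const.mul <| ((continuous_const.add continuous_id).rpow_const fun _ ↦ Or.inr hw₁).mul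
      ((continuous_const.add continuous_id).rpow_const fun _ ↦ Or.inr hw₂)
  have hlim := (hcont.tendsto 0).mono_left (nhdsWithin_le_nhds (s := Set.Ioi 0))
  simp only [add_zero] at hlim
  exact ge_of_tendsto hlim (eventually_nhdsWithin_of_forall hε)

/-- The fraction `θ ∈ [0, 1]` with `|θ * x| ^ p = b`, once `b` is clamped to `[0, |x| ^ p]`. -/
noncomputable def splitCoeff (p x b : ℝ) : ℝ := (max 0 (min b (|x| ^ p)) / |x| ^ p) ^ (1 / p)

lemma splitCoeff_nonneg (p x b : ℝ) : 0 ≤ splitCoeff p x b :=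
  rpow_nonneg (div_nonneg (le_max_left _ _) (rpow_nonneg (abs_nonneg x) p)) _

lemma splitCoeff_le_one (hp : 0 < p) (x b : ℝ) : splitCoeff p x b ≤ 1 :=
  rpow_le_one (div_nonneg (le_max_left _ _) (rpow_nonneg (abs_nonneg x) p))
    (div_le_one_of_le₀ (max_le (rpow_nonneg (abs_nonneg x) p) (min_le_right _ _))
      (rpow_nonneg (abs_nonneg x) p)) (by positivity)

lemma splitCoeff_rpow_mul (hp : 0 < p) (x b : ℝ) :
    splitCoeff p x b ^ p * |x| ^ p = max 0 (min b (|x| ^ p)) := by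
  have hm : 0 ≤ |x| ^ p := rpow_nonneg (abs_nonneg x) p
  rw [splitCoeff, one_div, rpow_inv_rpow (div_nonneg (le_max_left _ _) hm) hp.ne']
  rcases hm.eq_or_lt with hm0 | hm0
  · rw [← hm0]; simp
  · exact div_mul_cancel₀ _ hm0.ne'

lemma abs_splitCoeff_mul_rpow_le (hp : 0 < p) (x b : ℝ) : |splitCoeff p x b * x| ^ p ≤ |b| := by
  rw [abs_mul, abs_of_nonneg (splitCoeff_nonneg p x b), mul_rpow (splitCoeff_nonneg p x b)
    (abs_nonneg x), splitCoeff_rpow_mul hp]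
  exact max_le (abs_nonneg b) ((min_le_left _ _).trans (le_abs_self b))

lemma abs_sub_splitCoeff_mul_rpow_le (hp : 1 ≤ p) {b₀ b₁ : ℝ} (h : |x| ^ p = b₀ + b₁) :
    |x - splitCoeff p x b₀ * x| ^ p ≤ |b₁| := by
  have hp0 : 0 < p := by linarith
  set θ := splitCoeff p x b₀
  have hθ0 := splitCoeff_nonneg p x b₀
  have hθ1 := splitCoeff_le_one hp0 x b₀
  have hconv : θ ^ p + (1 - θ) ^ p ≤ 1 := by
    simpa using add_rpow_le_rpow_add hθ0 (sub_nonneg.2 hθ1) hp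
  calc |x - θ * x| ^ p = (1 - θ) ^ p * |x| ^ p := by
        rw [← one_sub_mul, abs_mul, abs_of_nonneg (sub_nonneg.2 hθ1),
          mul_rpow (sub_nonneg.2 hθ1) (abs_nonneg x)]
    _ ≤ (1 - θ ^ p) * |x| ^ p := by gcongr; linarith
    _ = |x| ^ p - max 0 (min b₀ (|x| ^ p)) := by rw [← splitCoeff_rpow_mul hp0]; ring
    _ ≤ |b₁| := by grind
end Real

namespace MeasureTheory.AEEqFun

variable {f g : Ω →ₘ[μ] ℝ}

lemma nonneg_iff : 0 ≤ f ↔ ∀ᵐ ω ∂μ, 0 ≤ f ω := by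
  rw [← coeFn_le]
  refine Filter.eventually_congr ?_
  filter_upwards [coeFn_zero (β := ℝ) (μ := μ)] with ω h
  rw [h, Pi.zero_apply]

lemma abs_le_abs_of_ae (h : ∀ᵐ ω ∂μ, |f ω| ≤ |g ω|) : |f| ≤ |g| := by
  refine coeFn_le.1 ?_
  filter_upwards [h, coeFn_abs f, coeFn_abs g] with ω h hf hg
  rw [hf, hg]
  exact h

lemma smul_nonneg {c : ℝ} (hc : 0 ≤ c) (hf : 0 ≤ f) : 0 ≤ c • f := by
  refine nonneg_iff.2 ?_
  filter_upwards [nonneg_iff.1 hf, coeFn_smul c f] with ω hf h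
  rw [h, Pi.smul_apply, smul_eq_mul]
  exact mul_nonneg hc hf

protected lemma mul_add (u f g : Ω →ₘ[μ] ℝ) : u * (f + g) = u * f + u * g := by
  induction u, f, g using induction_on₃ with
  | H u hu f hf g hg => simp only [mk_add_mk, mk_mul_mk, mul_add]

protected lemma mul_smul_comm (c : ℝ) (u f : Ω →ₘ[μ] ℝ) : u * (c • f) = c • (u * f) := by
  induction u, f using induction_on₂ with
  | H u hu f hf => simp only [smul_mk, mk_mul_mk, mul_smul_comm]

end MeasureTheory.AEEqFun

open AEEqFun

lemma absRpow_coeFn (p : ℝ) (f : Ω →ₘ[μ] ℝ) : absRpow p f =ᵐ[μ] fun ω ↦ |f ω| ^ p :=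
  coeFn_mk _ _

lemma absRpow_nonneg (p : ℝ) (f : Ω →ₘ[μ] ℝ) : 0 ≤ absRpow p f := by
  refine nonneg_iff.2 ?_
  filter_upwards [absRpow_coeFn p f] with ω h
  rw [h]
  exact Real.rpow_nonneg (abs_nonneg _) p

lemma absRpow_zero {p : ℝ} (hp : p ≠ 0) : absRpow p (0 : Ω →ₘ[μ] ℝ) = 0 := by
  refine ext ?_
  filter_upwards [absRpow_coeFn p (0 : Ω →ₘ[μ] ℝ), coeFn_zero (β := ℝ) (μ := μ)] with ω h h0
  simp [h, h0, Real.zero_rpow hp]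

/-- `sgn f * |f| ^ r`, written `f * |f| ^ (r - 1)`; where `f = 0` it vanishes. -/
noncomputable def signedRpow (r : ℝ) (f : Ω →ₘ[μ] ℝ) : Ω →ₘ[μ] ℝ :=
  AEEqFun.mk (fun ω ↦ f ω * |f ω| ^ (r - 1))
    ((by fun_prop : Measurable fun x : ℝ ↦ x * |x| ^ (r - 1)).comp_aemeasurable
      f.aemeasurable).aestronglyMeasurable

lemma signedRpow_coeFn (r : ℝ) (f : Ω →ₘ[μ] ℝ) :
    signedRpow r f =ᵐ[μ] fun ω ↦ f ω * |f ω| ^ (r - 1) :=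
  coeFn_mk _ _

lemma signedRpow_mul_self {p : ℝ} (hp : p ≠ 0) (f : Ω →ₘ[μ] ℝ) :
    signedRpow (p - 1) f * f = absRpow p f := by
  refine ext ?_
  filter_upwards [coeFn_mul (signedRpow (p - 1) f) f, signedRpow_coeFn (p - 1) f,
    absRpow_coeFn p f] with ω h hs ha
  rw [h, Pi.mul_apply, hs, ha]
  rcases eq_or_ne (f ω) 0 with h0 | h0
  · simp [h0, Real.zero_rpow hp]
  · have hf : 0 < |f ω| := abs_pos.2 h0
    rw [Real.rpow_sub_one hf.ne', Real.rpow_sub_one hf.ne', mul_right_comm, ← abs_mul_abs_self]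
    field_simp

lemma signedRpow_mul_absRpow (p : ℝ) (g : Ω →ₘ[μ] ℝ) :
    signedRpow (1 - p) g * absRpow p g = g := by
  refine ext ?_
  filter_upwards [coeFn_mul (signedRpow (1 - p) g) (absRpow p g), signedRpow_coeFn (1 - p) g,
    absRpow_coeFn p g] with ω h hs ha
  rw [h, Pi.mul_apply, hs, ha]
  rcases eq_or_ne (g ω) 0 with h0 | h0
  · simp [h0]
  · have hg : 0 < |g ω| := abs_pos.2 h0
    rw [mul_assoc, ← Real.rpow_add hg]
    simp

namespace BanachFunctionLattice

variable (X : BanachFunctionLattice Ω μ) {f g : Ω →ₘ[μ] ℝ}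

lemma mem_of_ae_abs_le (hf : f ∈ X.carrier) (h : ∀ᵐ ω ∂μ, |g ω| ≤ |f ω|) : g ∈ X.carrier :=
  X.ideal_mem f hf g (abs_le_abs_of_ae h)

lemma norm_le_of_ae_abs_le (hf : f ∈ X.carrier) (h : ∀ᵐ ω ∂μ, |g ω| ≤ |f ω|) :
    X.norm g ≤ X.norm f :=
  X.ideal_norm_le f hf g (abs_le_abs_of_ae h)

lemma zero_mem_pConv {p : ℝ} (hp : p ≠ 0) : (0 : Ω →ₘ[μ] ℝ) ∈ (pConv X p).carrier := by
  simpa [pConv, absRpow_zero hp] using X.zero_mem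

end BanachFunctionLattice

section Decomposition

variable {X₀ X₁ : BanachFunctionLattice Ω μ}

lemma exists_add_eq_of_ae_abs_le_add {w a₀ a₁ : Ω →ₘ[μ] ℝ} (ha₀ : a₀ ∈ X₀.carrier)
    (ha₁ : a₁ ∈ X₁.carrier) (h : ∀ᵐ ω ∂μ, |w ω| ≤ |a₀ ω| + |a₁ ω|) :
    ∃ w₀ ∈ X₀.carrier, ∃ w₁ ∈ X₁.carrier, w = w₀ + w₁ ∧
      X₀.norm w₀ ≤ X₀.norm a₀ ∧ X₁.norm w₁ ≤ X₁.norm a₁ := by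
  set w₀ := (w ⊓ |a₀|) ⊔ -|a₀|
  have hw₀ : w₀ =ᵐ[μ] fun ω ↦ max (min (w ω) |a₀ ω|) (-|a₀ ω|) := by
    filter_upwards [coeFn_sup (w ⊓ |a₀|) (-|a₀|), coeFn_inf w |a₀|, coeFn_neg |a₀|,
      coeFn_abs a₀] with ω h₁ h₂ h₃ h₄
    rw [h₁, h₂, h₃, Pi.neg_apply, h₄]
  have h₀ : ∀ᵐ ω ∂μ, |w₀ ω| ≤ |a₀ ω| := by
    filter_upwards [hw₀] with ω h
    rw [h]
    exact Real.abs_max_min_le (abs_nonneg _) _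
  have h₁ : ∀ᵐ ω ∂μ, |(w - w₀) ω| ≤ |a₁ ω| := by
    filter_upwards [h, hw₀, coeFn_sub w w₀] with ω h h₀ hsub
    rw [hsub, Pi.sub_apply, h₀]
    exact Real.abs_sub_max_min_le (abs_nonneg _) (abs_nonneg _) h
  exact ⟨w₀, X₀.mem_of_ae_abs_le ha₀ h₀, w - w₀, X₁.mem_of_ae_abs_le ha₁ h₁,
    (add_sub_cancel w₀ w).symm, X₀.norm_le_of_ae_abs_le ha₀ h₀, X₁.norm_le_of_ae_abs_le ha₁ h₁⟩

variable {x y w : Ω →ₘ[μ] ℝ}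

lemma add_mem_sumSet (hx : x ∈ sumSet X₀.toFunctionSpace X₁.toFunctionSpace)
    (hy : y ∈ sumSet X₀.toFunctionSpace X₁.toFunctionSpace) :
    x + y ∈ sumSet X₀.toFunctionSpace X₁.toFunctionSpace := by
  obtain ⟨a₀, ha₀, a₁, ha₁, rfl⟩ := hx
  obtain ⟨b₀, hb₀, b₁, hb₁, rfl⟩ := hy
  exact ⟨a₀ + b₀, X₀.add_mem ha₀ hb₀, a₁ + b₁, X₁.add_mem ha₁ hb₁, by abel⟩

lemma smul_mem_sumSet (c : ℝ) (hx : x ∈ sumSet X₀.toFunctionSpace X₁.toFunctionSpace) :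
    c • x ∈ sumSet X₀.toFunctionSpace X₁.toFunctionSpace := by
  obtain ⟨a₀, ha₀, a₁, ha₁, rfl⟩ := hx
  exact ⟨c • a₀, X₀.smul_mem c ha₀, c • a₁, X₁.smul_mem c ha₁, smul_add c a₀ a₁⟩

lemma mem_sumSet_of_ae_abs_le (hx : x ∈ sumSet X₀.toFunctionSpace X₁.toFunctionSpace)
    (h : ∀ᵐ ω ∂μ, |w ω| ≤ |x ω|) : w ∈ sumSet X₀.toFunctionSpace X₁.toFunctionSpace := by
  obtain ⟨a₀, ha₀, a₁, ha₁, rfl⟩ := hx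
  obtain ⟨w₀, hw₀, w₁, hw₁, hw, -⟩ := exists_add_eq_of_ae_abs_le_add ha₀ ha₁ <| by
    filter_upwards [h, coeFn_add a₀ a₁] with ω h hadd
    rw [hadd, Pi.add_apply] at h
    exact h.trans (abs_add_le _ _)
  exact ⟨w₀, hw₀, w₁, hw₁, hw⟩

end Decomposition

def FunctionSpace.NormNonneg (A : FunctionSpace Ω μ) : Prop := ∀ a ∈ A.carrier, 0 ≤ A.norm a

lemma BanachFunctionLattice.normNonneg_toFunctionSpace (X : BanachFunctionLattice Ω μ) :
    X.toFunctionSpace.NormNonneg :=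
  X.norm_nonneg

lemma BanachFunctionLattice.normNonneg_pConv (X : BanachFunctionLattice Ω μ) (p : ℝ) :
    (pConv X p).NormNonneg :=
  fun _ ha ↦ Real.rpow_nonneg (X.norm_nonneg _ ha) _

section KFunctional

variable {A₀ A₁ : FunctionSpace Ω μ} {t x : ℝ} {f : Ω →ₘ[μ] ℝ}

lemma mem_sumSet_left (h₁ : 0 ∈ A₁.carrier) (hf : f ∈ A₀.carrier) : f ∈ sumSet A₀ A₁ :=
  ⟨f, hf, 0, h₁, (add_zero f).symm⟩

lemma mem_sumSet_right (h₀ : 0 ∈ A₀.carrier) (hf : f ∈ A₁.carrier) : f ∈ sumSet A₀ A₁ :=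
  ⟨0, h₀, f, hf, (zero_add f).symm⟩

lemma Kfun_nonneg (h₀ : A₀.NormNonneg) (h₁ : A₁.NormNonneg) (ht : 0 ≤ t) (f : Ω →ₘ[μ] ℝ) :
    0 ≤ Kfun A₀ A₁ t f := by
  refine Real.sInf_nonneg ?_
  rintro _ ⟨a₀, ha₀, a₁, ha₁, -, rfl⟩
  exact add_nonneg (h₀ a₀ ha₀) (mul_nonneg ht (h₁ a₁ ha₁))

lemma Kfun_le (h₀ : A₀.NormNonneg) (h₁ : A₁.NormNonneg) (ht : 0 ≤ t) {a₀ a₁ : Ω →ₘ[μ] ℝ}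
    (ha₀ : a₀ ∈ A₀.carrier) (ha₁ : a₁ ∈ A₁.carrier) :
    Kfun A₀ A₁ t (a₀ + a₁) ≤ A₀.norm a₀ + t * A₁.norm a₁ := by
  refine csInf_le ⟨0, ?_⟩ ⟨a₀, ha₀, a₁, ha₁, rfl, rfl⟩
  rintro _ ⟨b₀, hb₀, b₁, hb₁, -, rfl⟩
  exact add_nonneg (h₀ b₀ hb₀) (mul_nonneg ht (h₁ b₁ hb₁))

lemma le_Kfun (hf : f ∈ sumSet A₀ A₁)
    (h : ∀ a₀ ∈ A₀.carrier, ∀ a₁ ∈ A₁.carrier, f = a₀ + a₁ → x ≤ A₀.norm a₀ + t * A₁.norm a₁) :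
    x ≤ Kfun A₀ A₁ t f := by
  obtain ⟨a₀, ha₀, a₁, ha₁, hf⟩ := hf
  refine le_csInf ⟨_, a₀, ha₀, a₁, ha₁, hf, rfl⟩ ?_
  rintro _ ⟨b₀, hb₀, b₁, hb₁, hb, rfl⟩
  exact h b₀ hb₀ b₁ hb₁ hb

lemma le_mul_Kfun_rpow (h₀ : A₀.NormNonneg) (h₁ : A₁.NormNonneg) (ht : 0 ≤ t)
    (hf : f ∈ sumSet A₀ A₁) {c q : ℝ} (hc : 0 < c) (hq : 0 < q)
    (h : ∀ a₀ ∈ A₀.carrier, ∀ a₁ ∈ A₁.carrier, f = a₀ + a₁ →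
      x ≤ c * (A₀.norm a₀ + t * A₁.norm a₁) ^ q) :
    x ≤ c * Kfun A₀ A₁ t f ^ q := by
  have hK := Kfun_nonneg h₀ h₁ ht f
  rcases le_or_gt x 0 with hx | hx
  · exact hx.trans (by positivity)
  have hroot : (x / c) ^ q⁻¹ ≤ Kfun A₀ A₁ t f := le_Kfun hf fun a₀ ha₀ a₁ ha₁ hsum ↦ by
    rw [Real.rpow_inv_le_iff_of_pos (by positivity)
      (add_nonneg (h₀ a₀ ha₀) (mul_nonneg ht (h₁ a₁ ha₁))) hq, div_le_iff₀' hc]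
    exact h a₀ ha₀ a₁ ha₁ hsum
  rw [← div_le_iff₀' hc]
  exact (Real.rpow_inv_le_iff_of_pos (by positivity) hK hq).1 hroot

lemma mul_Kfun_le_Kfun_smul {X₀ X₁ : BanachFunctionLattice Ω μ} {c : ℝ} (hc : 0 < c)
    (ht : 0 ≤ t) (hf : f ∈ sumSet X₀.toFunctionSpace X₁.toFunctionSpace) :
    c * Kfun X₀.toFunctionSpace X₁.toFunctionSpace t f ≤
      Kfun X₀.toFunctionSpace X₁.toFunctionSpace t (c • f) := by
  refine le_Kfun (smul_mem_sumSet c hf) fun b₀ hb₀ b₁ hb₁ hsum ↦ ?_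
  have hf' : f = c⁻¹ • b₀ + c⁻¹ • b₁ := by rw [← smul_add, ← hsum, inv_smul_smul₀ hc.ne']
  calc c * Kfun X₀.toFunctionSpace X₁.toFunctionSpace t f
      ≤ c * (X₀.norm (c⁻¹ • b₀) + t * X₁.norm (c⁻¹ • b₁)) := by
        rw [hf']
        exact mul_le_mul_of_nonneg_left (Kfun_le X₀.normNonneg_toFunctionSpace
          X₁.normNonneg_toFunctionSpace ht (X₀.smul_mem _ hb₀) (X₁.smul_mem _ hb₁)) hc.le
    _ = X₀.norm b₀ + t * X₁.norm b₁ := by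
        rw [X₀.norm_smul _ _ hb₀, X₁.norm_smul _ _ hb₁, abs_inv, abs_of_pos hc]
        field_simp

end KFunctional

section Convexification

variable {X₀ X₁ : BanachFunctionLattice Ω μ} {p t : ℝ} {f g : Ω →ₘ[μ] ℝ}

lemma exists_absRpow_add_eq (hp : 1 ≤ p) {a₀ a₁ : Ω →ₘ[μ] ℝ}
    (ha₀ : a₀ ∈ (pConv X₀ p).carrier) (ha₁ : a₁ ∈ (pConv X₁ p).carrier) :
    ∃ b₀ ∈ X₀.carrier, ∃ b₁ ∈ X₁.carrier, absRpow p (a₀ + a₁) = b₀ + b₁ ∧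
      X₀.norm b₀ ≤ 2 ^ (p - 1) * X₀.norm (absRpow p a₀) ∧
      X₁.norm b₁ ≤ 2 ^ (p - 1) * X₁.norm (absRpow p a₁) := by
  have hc : (0 : ℝ) ≤ 2 ^ (p - 1) := by positivity
  obtain ⟨b₀, hb₀, b₁, hb₁, hsum, hn₀, hn₁⟩ :=
    exists_add_eq_of_ae_abs_le_add (w := absRpow p (a₀ + a₁)) (X₀.smul_mem (2 ^ (p - 1)) ha₀)
      (X₁.smul_mem (2 ^ (p - 1)) ha₁) <| by
    filter_upwards [absRpow_coeFn p (a₀ + a₁), coeFn_add a₀ a₁, absRpow_coeFn p a₀,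
      absRpow_coeFn p a₁, coeFn_smul (2 ^ (p - 1) : ℝ) (absRpow p a₀),
      coeFn_smul (2 ^ (p - 1) : ℝ) (absRpow p a₁)] with ω h hadd h₀ h₁ hs₀ hs₁
    rw [h, hadd, hs₀, hs₁, Pi.add_apply, Pi.smul_apply, Pi.smul_apply, h₀, h₁, smul_eq_mul,
      smul_eq_mul, abs_of_nonneg (by positivity)]
    refine (Real.abs_add_rpow_le hp _ _).trans ?_
    rw [mul_add]
    exact add_le_add (le_abs_self _) (le_abs_self _)
  refine ⟨b₀, hb₀, b₁, hb₁, hsum, ?_, ?_⟩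
  · rwa [X₀.norm_smul _ _ ha₀, abs_of_nonneg hc] at hn₀
  · rwa [X₁.norm_smul _ _ ha₁, abs_of_nonneg hc] at hn₁

lemma absRpow_mem_sumSet (hp : 1 ≤ p) (hf : f ∈ sumSet (pConv X₀ p) (pConv X₁ p)) :
    absRpow p f ∈ sumSet X₀.toFunctionSpace X₁.toFunctionSpace := by
  obtain ⟨a₀, ha₀, a₁, ha₁, rfl⟩ := hf
  obtain ⟨b₀, hb₀, b₁, hb₁, hsum, -⟩ := exists_absRpow_add_eq hp ha₀ ha₁
  exact ⟨b₀, hb₀, b₁, hb₁, hsum⟩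

lemma exists_add_eq_of_absRpow_eq_add (hp : 1 ≤ p) {b₀ b₁ : Ω →ₘ[μ] ℝ} (hb₀ : b₀ ∈ X₀.carrier)
    (hb₁ : b₁ ∈ X₁.carrier) (hf : absRpow p f = b₀ + b₁) :
    ∃ a₀ ∈ (pConv X₀ p).carrier, ∃ a₁ ∈ (pConv X₁ p).carrier, f = a₀ + a₁ ∧
      X₀.norm (absRpow p a₀) ≤ X₀.norm b₀ ∧ X₁.norm (absRpow p a₁) ≤ X₁.norm b₁ := by
  have hp0 : 0 < p := by linarith
  have hm : Measurable fun q : ℝ × ℝ ↦ Real.splitCoeff p q.1 q.2 * q.1 := by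
    unfold Real.splitCoeff; fun_prop
  set a₀ : Ω →ₘ[μ] ℝ := AEEqFun.mk (fun ω ↦ Real.splitCoeff p (f ω) (b₀ ω) * f ω)
    (hm.comp_aemeasurable (f.aemeasurable.prodMk b₀.aemeasurable)).aestronglyMeasurable
  have ha₀ : a₀ =ᵐ[μ] fun ω ↦ Real.splitCoeff p (f ω) (b₀ ω) * f ω := coeFn_mk _ _
  have h₀ : ∀ᵐ ω ∂μ, |absRpow p a₀ ω| ≤ |b₀ ω| := by
    filter_upwards [absRpow_coeFn p a₀, ha₀] with ω h ha
    rw [h, ha, abs_of_nonneg (by positivity)]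
    exact Real.abs_splitCoeff_mul_rpow_le hp0 _ _
  have h₁ : ∀ᵐ ω ∂μ, |absRpow p (f - a₀) ω| ≤ |b₁ ω| := by
    have hf' : absRpow p f =ᵐ[μ] b₀ + b₁ := by rw [hf]; exact coeFn_add b₀ b₁
    filter_upwards [absRpow_coeFn p (f - a₀), coeFn_sub f a₀, ha₀, absRpow_coeFn p f, hf']
      with ω h hsub ha hF hF'
    rw [h, hsub, Pi.sub_apply, ha, abs_of_nonneg (by positivity)]
    refine Real.abs_sub_splitCoeff_mul_rpow_le hp ?_
    rw [← hF, hF', Pi.add_apply]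
  exact ⟨a₀, X₀.mem_of_ae_abs_le hb₀ h₀, f - a₀, X₁.mem_of_ae_abs_le hb₁ h₁,
    (add_sub_cancel a₀ f).symm, X₀.norm_le_of_ae_abs_le hb₀ h₀, X₁.norm_le_of_ae_abs_le hb₁ h₁⟩

lemma Kfun_absRpow_le (hp : 1 ≤ p) (ht : 0 ≤ t) (hg : g ∈ sumSet (pConv X₀ p) (pConv X₁ p)) :
    Kfun X₀.toFunctionSpace X₁.toFunctionSpace t (absRpow p g) ≤
      2 ^ (p - 1) * Kfun (pConv X₀ p) (pConv X₁ p) (t ^ (1 / p)) g ^ p := by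
  have hp0 : 0 < p := by linarith
  refine le_mul_Kfun_rpow (X₀.normNonneg_pConv p) (X₁.normNonneg_pConv p) (by positivity) hg
    (by positivity) hp0 fun a₀ ha₀ a₁ ha₁ hsum ↦ ?_
  obtain ⟨b₀, hb₀, b₁, hb₁, hb, hn₀, hn₁⟩ := exists_absRpow_add_eq hp ha₀ ha₁
  have hN₀ := X₀.norm_nonneg _ ha₀
  have hN₁ := X₁.norm_nonneg _ ha₁
  have hroot : ∀ N : ℝ, 0 ≤ N → (N ^ (1 / p)) ^ p = N := fun N hN ↦ by
    rw [one_div, Real.rpow_inv_rpow hN hp0.ne']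
  calc Kfun X₀.toFunctionSpace X₁.toFunctionSpace t (absRpow p g)
      ≤ X₀.norm b₀ + t * X₁.norm b₁ := by
        rw [hsum, hb]
        exact Kfun_le X₀.normNonneg_toFunctionSpace X₁.normNonneg_toFunctionSpace ht hb₀ hb₁
    _ ≤ 2 ^ (p - 1) * (X₀.norm (absRpow p a₀) + t * X₁.norm (absRpow p a₁)) := by
        rw [mul_add, mul_left_comm]; gcongr
    _ = 2 ^ (p - 1) * (((pConv X₀ p).norm a₀) ^ p + (t ^ (1 / p) * (pConv X₁ p).norm a₁) ^ p) := by
        simp only [pConv]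
        rw [Real.mul_rpow (by positivity) (by positivity), hroot _ hN₀, hroot _ hN₁, hroot _ ht]
    _ ≤ 2 ^ (p - 1) * ((pConv X₀ p).norm a₀ + t ^ (1 / p) * (pConv X₁ p).norm a₁) ^ p := by
        gcongr
        exact Real.add_rpow_le_rpow_add (X₀.normNonneg_pConv p _ ha₀)
          (mul_nonneg (by positivity) (X₁.normNonneg_pConv p _ ha₁)) hp

lemma Kfun_pConv_le (hp : 1 ≤ p) (ht : 0 ≤ t)
    (hf : absRpow p f ∈ sumSet X₀.toFunctionSpace X₁.toFunctionSpace) :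
    Kfun (pConv X₀ p) (pConv X₁ p) (t ^ (1 / p)) f ≤
      2 * Kfun X₀.toFunctionSpace X₁.toFunctionSpace t (absRpow p f) ^ (1 / p) := by
  have hp0 : 0 < p := by linarith
  refine le_mul_Kfun_rpow X₀.normNonneg_toFunctionSpace X₁.normNonneg_toFunctionSpace ht hf
    two_pos (by positivity) fun b₀ hb₀ b₁ hb₁ hsum ↦ ?_
  obtain ⟨a₀, ha₀, a₁, ha₁, rfl, hn₀, hn₁⟩ := exists_add_eq_of_absRpow_eq_add hp hb₀ hb₁ hsum
  have hN₀ := X₀.norm_nonneg _ ha₀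
  have hN₁ := X₁.norm_nonneg _ ha₁
  set r := X₀.norm b₀ + t * X₁.norm b₁
  have hr₀ : X₀.norm (absRpow p a₀) ≤ r := by
    have := mul_nonneg ht (X₁.norm_nonneg _ hb₁)
    linarith
  have hr₁ : t * X₁.norm (absRpow p a₁) ≤ r := by
    have := mul_le_mul_of_nonneg_left hn₁ ht
    linarith [X₀.norm_nonneg _ hb₀]
  calc Kfun (pConv X₀ p) (pConv X₁ p) (t ^ (1 / p)) (a₀ + a₁)
      ≤ (pConv X₀ p).norm a₀ + t ^ (1 / p) * (pConv X₁ p).norm a₁ :=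
        Kfun_le (X₀.normNonneg_pConv p) (X₁.normNonneg_pConv p) (by positivity) ha₀ ha₁
    _ = X₀.norm (absRpow p a₀) ^ (1 / p) + (t * X₁.norm (absRpow p a₁)) ^ (1 / p) := by
        rw [Real.mul_rpow ht hN₁]; rfl
    _ ≤ r ^ (1 / p) + r ^ (1 / p) := by gcongr
    _ = 2 * r ^ (1 / p) := by ring

lemma Kfun_absRpow_le_mul_of_Kfun_pConv_le (hp : 1 ≤ p)
    (hf : f ∈ sumSet (pConv X₀ p) (pConv X₁ p)) (hg : g ∈ sumSet (pConv X₀ p) (pConv X₁ p))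
    (hK : ∀ t > 0, Kfun (pConv X₀ p) (pConv X₁ p) t g ≤ Kfun (pConv X₀ p) (pConv X₁ p) t f)
    (t : ℝ) (ht : 0 < t) :
    Kfun X₀.toFunctionSpace X₁.toFunctionSpace t (absRpow p g) ≤
      2 ^ (p - 1) * 2 ^ p * Kfun X₀.toFunctionSpace X₁.toFunctionSpace t (absRpow p f) := by
  have hp0 : 0 < p := by linarith
  have ht' : 0 < t ^ (1 / p) := by positivity
  have hKg := Kfun_nonneg (X₀.normNonneg_pConv p) (X₁.normNonneg_pConv p) ht'.le g
  have hKf := Kfun_nonneg (X₀.normNonneg_pConv p) (X₁.normNonneg_pConv p) ht'.le f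
  have hKF := Kfun_nonneg X₀.normNonneg_toFunctionSpace X₁.normNonneg_toFunctionSpace ht.le
    (absRpow p f)
  calc Kfun X₀.toFunctionSpace X₁.toFunctionSpace t (absRpow p g)
      ≤ 2 ^ (p - 1) * Kfun (pConv X₀ p) (pConv X₁ p) (t ^ (1 / p)) g ^ p :=
        Kfun_absRpow_le hp ht.le hg
    _ ≤ 2 ^ (p - 1) * Kfun (pConv X₀ p) (pConv X₁ p) (t ^ (1 / p)) f ^ p := by
        gcongr; exact hK _ ht'
    _ ≤ 2 ^ (p - 1) *
          (2 * Kfun X₀.toFunctionSpace X₁.toFunctionSpace t (absRpow p f) ^ (1 / p)) ^ p := by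
        gcongr
        exact Kfun_pConv_le hp ht.le (absRpow_mem_sumSet hp hf)
    _ = 2 ^ (p - 1) * 2 ^ p * Kfun X₀.toFunctionSpace X₁.toFunctionSpace t (absRpow p f) := by
        rw [Real.mul_rpow zero_le_two (by positivity), one_div, Real.rpow_inv_rpow hKF hp0.ne',
          mul_assoc]

end Convexification

section PositiveOperator

variable {X₀ X₁ : BanachFunctionLattice Ω μ} {S : (Ω →ₘ[μ] ℝ) → Ω →ₘ[μ] ℝ} {p : ℝ}

lemma ae_abs_apply_le_of_ae_abs_le
    (hS : IsBoundedCoupleOperator X₀.toFunctionSpace X₁.toFunctionSpace S)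
    (hSpos : IsPositiveOn X₀.toFunctionSpace X₁.toFunctionSpace S) {v Y : Ω →ₘ[μ] ℝ}
    (hv : v ∈ sumSet X₀.toFunctionSpace X₁.toFunctionSpace)
    (hY : Y ∈ sumSet X₀.toFunctionSpace X₁.toFunctionSpace) (hvY : ∀ᵐ ω ∂μ, |v ω| ≤ Y ω) :
    ∀ᵐ ω ∂μ, |S v ω| ≤ S Y ω := by
  have hv' := smul_mem_sumSet (-1) hv
  have hplus : 0 ≤ S (Y + v) := hSpos _ (add_mem_sumSet hY hv) <| nonneg_iff.2 <| by
    filter_upwards [hvY, coeFn_add Y v] with ω h hadd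
    rw [hadd, Pi.add_apply]
    linarith [neg_abs_le (v ω)]
  have hminus : 0 ≤ S (Y + (-1 : ℝ) • v) := hSpos _ (add_mem_sumSet hY hv') <| nonneg_iff.2 <| by
    filter_upwards [hvY, coeFn_add Y ((-1 : ℝ) • v), coeFn_smul (-1 : ℝ) v] with ω h hadd hsmul
    rw [hadd, Pi.add_apply, hsmul, Pi.smul_apply, smul_eq_mul]
    linarith [le_abs_self (v ω)]
  rw [hS.1 _ hY _ hv] at hplus
  rw [hS.1 _ hY _ hv', hS.2.1 _ _ hv] at hminus
  filter_upwards [nonneg_iff.1 hplus, nonneg_iff.1 hminus, coeFn_add (S Y) (S v),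
    coeFn_add (S Y) ((-1 : ℝ) • S v), coeFn_smul (-1 : ℝ) (S v)] with ω hp hm hadd hadd' hsmul
  rw [hadd, Pi.add_apply] at hp
  rw [hadd', Pi.add_apply, hsmul, Pi.smul_apply, smul_eq_mul] at hm
  rw [abs_le]
  constructor <;> linarith

/-- Bound `|v|` by `q A + q ^ (1 - p) B` for every rational `q > 0`, apply `S`, and optimise over
`q` pointwise; countably many `q` keep the bounds simultaneously valid a.e. -/
lemma ae_abs_apply_le_three_mul_rpow_mul_rpow (hp : 1 < p)
    (hS : IsBoundedCoupleOperator X₀.toFunctionSpace X₁.toFunctionSpace S)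
    (hSpos : IsPositiveOn X₀.toFunctionSpace X₁.toFunctionSpace S) {A B v : Ω →ₘ[μ] ℝ}
    (hA : A ∈ sumSet X₀.toFunctionSpace X₁.toFunctionSpace)
    (hB : B ∈ sumSet X₀.toFunctionSpace X₁.toFunctionSpace) (hA0 : 0 ≤ A) (hB0 : 0 ≤ B)
    (hv : v ∈ sumSet X₀.toFunctionSpace X₁.toFunctionSpace)
    (hvAB : ∀ᵐ ω ∂μ, |v ω| ≤ A ω ^ (1 - 1 / p) * B ω ^ (1 / p)) :
    ∀ᵐ ω ∂μ, |S v ω| ≤ 3 * (S A ω ^ (1 - 1 / p) * S B ω ^ (1 / p)) := by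
  have hq : ∀ q : ℚ, 0 < q → ∀ᵐ ω ∂μ, |S v ω| ≤ q * S A ω + (q : ℝ) ^ (1 - p) * S B ω := by
    intro q hq
    have hq' : (0 : ℝ) < q := Rat.cast_pos.2 hq
    have hAq := smul_mem_sumSet (q : ℝ) hA
    have hBq := smul_mem_sumSet ((q : ℝ) ^ (1 - p)) hB
    have hSY := ae_abs_apply_le_of_ae_abs_le hS hSpos hv (add_mem_sumSet hAq hBq) <| by
      filter_upwards [hvAB, nonneg_iff.1 hA0, nonneg_iff.1 hB0,
        coeFn_add ((q : ℝ) • A) ((q : ℝ) ^ (1 - p) • B), coeFn_smul (q : ℝ) A,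
        coeFn_smul ((q : ℝ) ^ (1 - p)) B] with ω h hA0 hB0 hadd hsA hsB
      rw [hadd, Pi.add_apply, hsA, hsB, Pi.smul_apply, Pi.smul_apply, smul_eq_mul, smul_eq_mul]
      exact h.trans (Real.rpow_mul_rpow_le_mul_add_rpow_mul hp hA0 hB0 hq')
    rw [hS.1 _ hAq _ hBq, hS.2.1 _ _ hA, hS.2.1 _ _ hB] at hSY
    filter_upwards [hSY, coeFn_add ((q : ℝ) • S A) ((q : ℝ) ^ (1 - p) • S B),
      coeFn_smul (q : ℝ) (S A), coeFn_smul ((q : ℝ) ^ (1 - p)) (S B)] with ω h hadd hsA hsB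
    rwa [hadd, Pi.add_apply, hsA, hsB, Pi.smul_apply, Pi.smul_apply, smul_eq_mul,
      smul_eq_mul] at h
  filter_upwards [ae_all_iff.2 fun q : {q : ℚ // 0 < q} ↦ hq q q.2,
    nonneg_iff.1 (hSpos A hA hA0), nonneg_iff.1 (hSpos B hB hB0)] with ω h hSA hSB
  exact Real.le_three_mul_rpow_mul_rpow hp hSA hSB fun q hq ↦ h ⟨q, hq⟩

lemma IsPositiveCalderonCouple.exists_apply_eq_of_Kfun_le_mul
    (h : IsPositiveCalderonCouple X₀.toFunctionSpace X₁.toFunctionSpace) {c : ℝ} (hc : 0 < c)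
    {F G : Ω →ₘ[μ] ℝ} (hF : F ∈ sumSet X₀.toFunctionSpace X₁.toFunctionSpace)
    (hG : G ∈ sumSet X₀.toFunctionSpace X₁.toFunctionSpace) (hF0 : 0 ≤ F) (hG0 : 0 ≤ G)
    (hK : ∀ t > 0, Kfun X₀.toFunctionSpace X₁.toFunctionSpace t G ≤
      c * Kfun X₀.toFunctionSpace X₁.toFunctionSpace t F) :
    ∃ S, IsBoundedCoupleOperator X₀.toFunctionSpace X₁.toFunctionSpace S ∧
      IsPositiveOn X₀.toFunctionSpace X₁.toFunctionSpace S ∧ S F = G := by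
  obtain ⟨S, ⟨hadd, hsmul, hmap₀, hmap₁, ⟨C₀, hC₀⟩, ⟨C₁, hC₁⟩⟩, hpos, hSF⟩ :=
    h (c • F) (smul_mem_sumSet c hF) G hG (AEEqFun.smul_nonneg hc.le hF0) hG0 fun t ht ↦
      (hK t ht).trans (mul_Kfun_le_Kfun_smul hc ht.le hF)
  refine ⟨fun x ↦ S (c • x), ⟨fun x hx y hy ↦ ?_, fun a x hx ↦ ?_,
    fun x hx ↦ hmap₀ _ (X₀.smul_mem c hx), fun x hx ↦ hmap₁ _ (X₁.smul_mem c hx),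
    ⟨C₀ * c, fun x hx ↦ ?_⟩, ⟨C₁ * c, fun x hx ↦ ?_⟩⟩,
    fun x hx hx0 ↦ hpos _ (smul_mem_sumSet c hx) (AEEqFun.smul_nonneg hc.le hx0), hSF⟩
  · simp only [smul_add]
    exact hadd _ (smul_mem_sumSet c hx) _ (smul_mem_sumSet c hy)
  · simp only [smul_comm c a]
    exact hsmul a _ (smul_mem_sumSet c hx)
  · calc X₀.norm (S (c • x)) ≤ C₀ * X₀.norm (c • x) := hC₀ _ (X₀.smul_mem c hx)
      _ = C₀ * c * X₀.norm x := by rw [X₀.norm_smul c x hx, abs_of_pos hc, mul_assoc]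
  · calc X₁.norm (S (c • x)) ≤ C₁ * X₁.norm (c • x) := hC₁ _ (X₁.smul_mem c hx)
      _ = C₁ * c * X₁.norm x := by rw [X₁.norm_smul c x hx, abs_of_pos hc, mul_assoc]

end PositiveOperator

lemma BanachFunctionLattice.pConv_bounded_of_absRpow_le (X : BanachFunctionLattice Ω μ)
    {S T : (Ω →ₘ[μ] ℝ) → Ω →ₘ[μ] ℝ} {p κ : ℝ} (hp : 0 < p) (hκ : 0 ≤ κ)
    (hS : ∀ x ∈ X.carrier, S x ∈ X.carrier)
    (hSC : ∃ C : ℝ, ∀ x ∈ X.carrier, X.norm (S x) ≤ C * X.norm x)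
    (hT : ∀ h ∈ (pConv X p).carrier, absRpow p (T h) ≤ κ • S (absRpow p h)) :
    (∀ h ∈ (pConv X p).carrier, T h ∈ (pConv X p).carrier) ∧
      ∃ C : ℝ, ∀ h ∈ (pConv X p).carrier, (pConv X p).norm (T h) ≤ C * (pConv X p).norm h := by
  obtain ⟨C, hC⟩ := hSC
  have key : ∀ h ∈ (pConv X p).carrier, absRpow p (T h) ∈ X.carrier ∧
      X.norm (absRpow p (T h)) ≤ κ * max C 0 * X.norm (absRpow p h) := by
    intro h hh
    have hκS := X.smul_mem κ (hS _ hh)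
    have hle : ∀ᵐ ω ∂μ, |absRpow p (T h) ω| ≤ |(κ • S (absRpow p h)) ω| := by
      filter_upwards [coeFn_le.2 (hT h hh), nonneg_iff.1 (absRpow_nonneg p (T h))] with ω h h0
      exact (abs_of_nonneg h0).trans_le (h.trans (le_abs_self _))
    refine ⟨X.mem_of_ae_abs_le hκS hle, ?_⟩
    calc X.norm (absRpow p (T h)) ≤ X.norm (κ • S (absRpow p h)) := X.norm_le_of_ae_abs_le hκS hle
      _ = κ * X.norm (S (absRpow p h)) := by rw [X.norm_smul _ _ (hS _ hh), abs_of_nonneg hκ]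
      _ ≤ κ * (max C 0 * X.norm (absRpow p h)) := by
          gcongr
          exact (hC _ hh).trans
            (mul_le_mul_of_nonneg_right (le_max_left C 0) (X.norm_nonneg _ hh))
      _ = κ * max C 0 * X.norm (absRpow p h) := by ring
  refine ⟨fun h hh ↦ (key h hh).1, (κ * max C 0) ^ (1 / p), fun h hh ↦ ?_⟩
  calc X.norm (absRpow p (T h)) ^ (1 / p) ≤ (κ * max C 0 * X.norm (absRpow p h)) ^ (1 / p) :=
        Real.rpow_le_rpow (X.norm_nonneg _ (key h hh).1) (key h hh).2 (by positivity)
    _ = (κ * max C 0) ^ (1 / p) * X.norm (absRpow p h) ^ (1 / p) :=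
        Real.mul_rpow (by positivity) (X.norm_nonneg _ hh)

noncomputable def twistedOp (S : (Ω →ₘ[μ] ℝ) → Ω →ₘ[μ] ℝ) (p : ℝ) (f g h : Ω →ₘ[μ] ℝ) :
    Ω →ₘ[μ] ℝ :=
  signedRpow (1 - p) g * S (signedRpow (p - 1) f * h)

section TwistedOp

variable {X₀ X₁ : BanachFunctionLattice Ω μ} {S : (Ω →ₘ[μ] ℝ) → Ω →ₘ[μ] ℝ} {p : ℝ}
  {f g h : Ω →ₘ[μ] ℝ}

lemma twistedOp_self (hp : p ≠ 0) (hSF : S (absRpow p f) = absRpow p g) :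
    twistedOp S p f g f = g := by
  rw [twistedOp, signedRpow_mul_self hp, hSF, signedRpow_mul_absRpow]

lemma ae_abs_signedRpow_mul_eq (hp : 1 < p) (f h : Ω →ₘ[μ] ℝ) :
    ∀ᵐ ω ∂μ, |(signedRpow (p - 1) f * h) ω| =
      absRpow p f ω ^ (1 - 1 / p) * absRpow p h ω ^ (1 / p) := by
  have hp0 : 0 < p := by linarith
  filter_upwards [coeFn_mul (signedRpow (p - 1) f) h, signedRpow_coeFn (p - 1) f,
    absRpow_coeFn p f, absRpow_coeFn p h] with ω hmul hs hf hh
  rw [hmul, Pi.mul_apply, hs, hf, hh, abs_mul, Real.abs_mul_abs_rpow_sub_one (by linarith),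
    ← Real.rpow_mul (abs_nonneg _), ← Real.rpow_mul (abs_nonneg _), mul_one_div_cancel hp0.ne',
    Real.rpow_one]
  congr 2
  field_simp

lemma signedRpow_mul_mem_sumSet (hp : 1 < p) (hf : f ∈ sumSet (pConv X₀ p) (pConv X₁ p))
    (hh : h ∈ sumSet (pConv X₀ p) (pConv X₁ p)) :
    signedRpow (p - 1) f * h ∈ sumSet X₀.toFunctionSpace X₁.toFunctionSpace := by
  refine mem_sumSet_of_ae_abs_le (add_mem_sumSet (absRpow_mem_sumSet hp.le hf)
    (absRpow_mem_sumSet hp.le hh)) ?_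
  filter_upwards [ae_abs_signedRpow_mul_eq hp f h, coeFn_add (absRpow p f) (absRpow p h),
    nonneg_iff.1 (absRpow_nonneg p f), nonneg_iff.1 (absRpow_nonneg p h)] with ω heq hadd hF hH
  rw [heq, hadd, Pi.add_apply, abs_of_nonneg (add_nonneg hF hH)]
  simpa using Real.rpow_mul_rpow_le_mul_add_rpow_mul hp hF hH one_pos

lemma absRpow_twistedOp_le (hp : 1 < p)
    (hS : IsBoundedCoupleOperator X₀.toFunctionSpace X₁.toFunctionSpace S)
    (hSpos : IsPositiveOn X₀.toFunctionSpace X₁.toFunctionSpace S)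
    (hSF : S (absRpow p f) = absRpow p g) (hf : f ∈ sumSet (pConv X₀ p) (pConv X₁ p))
    (hh : h ∈ sumSet (pConv X₀ p) (pConv X₁ p)) :
    absRpow p (twistedOp S p f g h) ≤ (3 ^ p : ℝ) • S (absRpow p h) := by
  have hp0 : 0 < p := by linarith
  have hH := absRpow_mem_sumSet hp.le hh
  have hHolder := ae_abs_apply_le_three_mul_rpow_mul_rpow hp hS hSpos
    (absRpow_mem_sumSet hp.le hf) hH (absRpow_nonneg p f) (absRpow_nonneg p h)
    (signedRpow_mul_mem_sumSet hp hf hh) ((ae_abs_signedRpow_mul_eq hp f h).mono fun _ ↦ le_of_eq)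
  rw [hSF] at hHolder
  refine coeFn_le.1 ?_
  filter_upwards [hHolder, absRpow_coeFn p (twistedOp S p f g h),
    coeFn_mul (signedRpow (1 - p) g) (S (signedRpow (p - 1) f * h)),
    signedRpow_coeFn (1 - p) g, absRpow_coeFn p g, coeFn_smul (3 ^ p : ℝ) (S (absRpow p h)),
    nonneg_iff.1 (hSpos _ hH (absRpow_nonneg p h))] with ω hHolder hT hmul hs hg hsmul hSH
  rw [hT, twistedOp, hmul, Pi.mul_apply, hs, hsmul, Pi.smul_apply, smul_eq_mul]
  rw [hg, ← Real.rpow_mul (abs_nonneg _), mul_one_sub, mul_one_div_cancel hp0.ne'] at hHolder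
  have hgg := Real.rpow_one_sub_mul_rpow_le_one (abs_nonneg (g ω)) p
  set s := S (absRpow p h) ω
  set z := S (signedRpow (p - 1) f * h) ω
  calc |g ω * |g ω| ^ (1 - p - 1) * z| ^ p = (|g ω| ^ (1 - p) * |z|) ^ p := by
        rw [abs_mul, Real.abs_mul_abs_rpow_sub_one (by linarith)]
    _ ≤ (3 * s ^ (1 / p)) ^ p := by
        refine Real.rpow_le_rpow (by positivity) ?_ hp0.le
        calc |g ω| ^ (1 - p) * |z| ≤ |g ω| ^ (1 - p) * (3 * (|g ω| ^ (p - 1) * s ^ (1 / p))) := by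
              gcongr
          _ = 3 * s ^ (1 / p) * (|g ω| ^ (1 - p) * |g ω| ^ (p - 1)) := by ring
          _ ≤ 3 * s ^ (1 / p) := mul_le_of_le_one_right (by positivity) hgg
    _ = 3 ^ p * s := by
        rw [Real.mul_rpow (by norm_num) (by positivity), one_div, Real.rpow_inv_rpow hSH hp0.ne']

lemma isBoundedCoupleOperator_twistedOp (hp : 1 < p)
    (hS : IsBoundedCoupleOperator X₀.toFunctionSpace X₁.toFunctionSpace S)
    (hSpos : IsPositiveOn X₀.toFunctionSpace X₁.toFunctionSpace S)
    (hSF : S (absRpow p f) = absRpow p g) (hf : f ∈ sumSet (pConv X₀ p) (pConv X₁ p)) :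
    IsBoundedCoupleOperator (pConv X₀ p) (pConv X₁ p) (twistedOp S p f g) := by
  have hp0 : p ≠ 0 := by linarith
  have hv := fun x (hx : x ∈ sumSet (pConv X₀ p) (pConv X₁ p)) ↦ signedRpow_mul_mem_sumSet hp hf hx
  have hT := fun x (hx : x ∈ sumSet (pConv X₀ p) (pConv X₁ p)) ↦
    absRpow_twistedOp_le hp hS hSpos hSF hf hx
  obtain ⟨hadd, hsmul, hmap₀, hmap₁, hC₀, hC₁⟩ := hS
  obtain ⟨hmap₀', hC₀'⟩ := X₀.pConv_bounded_of_absRpow_le (by linarith) (by positivity) hmap₀ hC₀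
    fun x hx ↦ hT x (mem_sumSet_left (X₁.zero_mem_pConv hp0) hx)
  obtain ⟨hmap₁', hC₁'⟩ := X₁.pConv_bounded_of_absRpow_le (by linarith) (by positivity) hmap₁ hC₁
    fun x hx ↦ hT x (mem_sumSet_right (X₀.zero_mem_pConv hp0) hx)
  refine ⟨fun x hx y hy ↦ ?_, fun c x hx ↦ ?_, hmap₀', hmap₁', hC₀', hC₁'⟩
  · simp only [twistedOp]
    rw [AEEqFun.mul_add, hadd _ (hv x hx) _ (hv y hy), AEEqFun.mul_add]
  · simp only [twistedOp]
    rw [AEEqFun.mul_smul_comm, hsmul _ _ (hv x hx), AEEqFun.mul_smul_comm]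

end TwistedOp

theorem pConv_isCalderonCouple_general
    (X₀ X₁ : BanachFunctionLattice Ω μ)
    (hpos : IsPositiveCalderonCouple X₀.toFunctionSpace X₁.toFunctionSpace)
    (p : ℝ) (hp : 1 < p) :
    IsCalderonCouple (pConv X₀ p) (pConv X₁ p) := by
  intro f hf g hg hK
  obtain ⟨S, hS, hSpos, hSF⟩ := hpos.exists_apply_eq_of_Kfun_le_mul (by positivity)
    (absRpow_mem_sumSet hp.le hf) (absRpow_mem_sumSet hp.le hg) (absRpow_nonneg p f)
    (absRpow_nonneg p g) (Kfun_absRpow_le_mul_of_Kfun_pConv_le hp.le hf hg hK)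
  exact ⟨twistedOp S p f g, isBoundedCoupleOperator_twistedOp hp hS hSpos hSF hf,
    twistedOp_self (by linarith) hSF⟩

/-- If `(X₀, X₁)` is a positive Calderón couple of Banach lattices of
measurable functions on a common measure space, and `X₀` and `X₁` are complete lattices,
then for every `p ∈ (1, ∞)` the couple of `p`-convexifications `(X₀^(p), X₁^(p))` is a
Calderón couple. -/
theorem pConv_isCalderonCouple
    (X₀ X₁ : BanachFunctionLattice Ω μ)
    (hpos : IsPositiveCalderonCouple X₀.toFunctionSpace X₁.toFunctionSpace)
    (h₀ : HasLUBP X₀.carrier) (h₁ : HasLUBP X₁.carrier)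
    (p : ℝ) (hp : 1 < p) :
    IsCalderonCouple (pConv X₀ p) (pConv X₁ p) :=
  pConv_isCalderonCouple_general X₀ X₁ hpos p hp
end

section
/- Let X₀ and X₁ be Banach lattices of measurable functions on a common measure space. Then for every t > 0 and every f ∈ X₀+X₁ one has K(t,f;X₀,X₁) ≤ D(t,f;X₀,X₁) ≤ 2·K(t,f;X₀,X₁); in particular, every f ∈ X₀+X₁ admits a decomposition f = a₀+a₁ with aⱼ ∈ Xⱼ and a₀·a₁ = 0 a.e. -/
open MeasureTheory

variable {Ω : Type*} [MeasurableSpace Ω] {μ : MeasureTheory.Measure Ω}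

/-- Key lemma: any decomposition can be replaced by a disjoint one at the cost of a
factor 2 in the norms. -/
lemma disjointify (X₀ X₁ : BanachFunctionLattice Ω μ) (f a₀ a₁ : Ω →ₘ[μ] ℝ)
    (ha₀ : a₀ ∈ X₀.carrier) (ha₁ : a₁ ∈ X₁.carrier) (hdec : f = a₀ + a₁) :
    ∃ b₀ ∈ X₀.carrier, ∃ b₁ ∈ X₁.carrier, f = b₀ + b₁ ∧ b₀ * b₁ = 0 ∧
      X₀.norm b₀ ≤ 2 * X₀.norm a₀ ∧ X₁.norm b₁ ≤ 2 * X₁.norm a₁ := by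
  classical
  set g₀ : Ω → ℝ := a₀.aestronglyMeasurable.mk _ with hg₀def
  set g₁ : Ω → ℝ := a₁.aestronglyMeasurable.mk _ with hg₁def
  have hg₀ : (a₀ : Ω → ℝ) =ᵐ[μ] g₀ := a₀.aestronglyMeasurable.ae_eq_mk
  have hg₁ : (a₁ : Ω → ℝ) =ᵐ[μ] g₁ := a₁.aestronglyMeasurable.ae_eq_mk
  have hm₀ : Measurable g₀ := a₀.aestronglyMeasurable.stronglyMeasurable_mk.measurable
  have hm₁ : Measurable g₁ := a₁.aestronglyMeasurable.stronglyMeasurable_mk.measurable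
  set s : Set Ω := {ω | |g₁ ω| ≤ |g₀ ω|} with hsdef
  have hs : MeasurableSet s := measurableSet_le (hm₁.abs) (hm₀.abs)
  set b₀ : Ω →ₘ[μ] ℝ :=
    AEEqFun.mk (s.indicator f) (f.aestronglyMeasurable.indicator hs) with hb₀def
  set b₁ : Ω →ₘ[μ] ℝ :=
    AEEqFun.mk (sᶜ.indicator f) (f.aestronglyMeasurable.indicator hs.compl) with hb₁def
  have hsum : (f : Ω → ℝ) =ᵐ[μ] (a₀ : Ω → ℝ) + (a₁ : Ω → ℝ) := by
    rw [hdec]; exact AEEqFun.coeFn_add a₀ a₁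
  -- pointwise bounds
  have habs₀ : |b₀| ≤ |(2 : ℝ) • a₀| := by
    rw [← AEEqFun.coeFn_le]
    filter_upwards [AEEqFun.coeFn_abs b₀, AEEqFun.coeFn_abs ((2 : ℝ) • a₀),
      AEEqFun.coeFn_smul (2 : ℝ) a₀, AEEqFun.coeFn_mk (s.indicator f)
        (f.aestronglyMeasurable.indicator hs), hsum, hg₀, hg₁] with ω h1 h2 h3 h4 h5 h6 h7
    rw [h1, h2, h3]
    rw [← hb₀def] at h4
    rw [h4]
    simp only [Pi.smul_apply, smul_eq_mul]
    by_cases hω : ω ∈ s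
    · rw [Set.indicator_of_mem hω]
      have : |g₁ ω| ≤ |g₀ ω| := hω
      rw [← h6, ← h7] at this
      calc |f ω| = |a₀ ω + a₁ ω| := by rw [h5]; rfl
        _ ≤ |a₀ ω| + |a₁ ω| := abs_add_le _ _
        _ ≤ |a₀ ω| + |a₀ ω| := by linarith
        _ = |(2 : ℝ) * a₀ ω| := by rw [abs_mul]; norm_num; ring
    · rw [Set.indicator_of_notMem hω]; simp [abs_nonneg]
  have habs₁ : |b₁| ≤ |(2 : ℝ) • a₁| := by
    rw [← AEEqFun.coeFn_le]
    filter_upwards [AEEqFun.coeFn_abs b₁, AEEqFun.coeFn_abs ((2 : ℝ) • a₁),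
      AEEqFun.coeFn_smul (2 : ℝ) a₁, AEEqFun.coeFn_mk (sᶜ.indicator f)
        (f.aestronglyMeasurable.indicator hs.compl), hsum, hg₀, hg₁] with ω h1 h2 h3 h4 h5 h6 h7
    rw [h1, h2, h3]
    rw [← hb₁def] at h4
    rw [h4]
    simp only [Pi.smul_apply, smul_eq_mul]
    by_cases hω : ω ∈ sᶜ
    · rw [Set.indicator_of_mem hω]
      have : ¬ (|g₁ ω| ≤ |g₀ ω|) := hω
      push_neg at this
      rw [← h6, ← h7] at this
      calc |f ω| = |a₀ ω + a₁ ω| := by rw [h5]; rfl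
        _ ≤ |a₀ ω| + |a₁ ω| := abs_add_le _ _
        _ ≤ |a₁ ω| + |a₁ ω| := by linarith
        _ = |(2 : ℝ) * a₁ ω| := by rw [abs_mul]; norm_num; ring
    · rw [Set.indicator_of_notMem hω]; simp [abs_nonneg]
  have hmem₀ : b₀ ∈ X₀.carrier :=
    X₀.ideal_mem _ (X₀.smul_mem (2 : ℝ) ha₀) b₀ habs₀
  have hmem₁ : b₁ ∈ X₁.carrier :=
    X₁.ideal_mem _ (X₁.smul_mem (2 : ℝ) ha₁) b₁ habs₁
  have hn₀ : X₀.norm b₀ ≤ 2 * X₀.norm a₀ := by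
    have := X₀.ideal_norm_le _ (X₀.smul_mem (2 : ℝ) ha₀) b₀ habs₀
    rwa [X₀.norm_smul 2 a₀ ha₀, abs_two] at this
  have hn₁ : X₁.norm b₁ ≤ 2 * X₁.norm a₁ := by
    have := X₁.ideal_norm_le _ (X₁.smul_mem (2 : ℝ) ha₁) b₁ habs₁
    rwa [X₁.norm_smul 2 a₁ ha₁, abs_two] at this
  have hsum' : f = b₀ + b₁ := by
    apply AEEqFun.ext
    have h3 := AEEqFun.coeFn_mk (s.indicator f) (f.aestronglyMeasurable.indicator hs)
    have h4 := AEEqFun.coeFn_mk (sᶜ.indicator f) (f.aestronglyMeasurable.indicator hs.compl)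
    rw [← hb₀def] at h3
    rw [← hb₁def] at h4
    filter_upwards [AEEqFun.coeFn_add b₀ b₁, h3, h4] with ω h1 h3 h4
    rw [h1]
    show (f : Ω → ℝ) ω = b₀ ω + b₁ ω
    rw [h3, h4]
    exact congrFun (Set.indicator_self_add_compl s (f : Ω → ℝ)) ω |>.symm
  have hdisj : b₀ * b₁ = 0 := by
    apply AEEqFun.ext
    filter_upwards [AEEqFun.coeFn_mul b₀ b₁, AEEqFun.coeFn_zero (β := ℝ) (μ := μ),
      AEEqFun.coeFn_mk (s.indicator f) (f.aestronglyMeasurable.indicator hs),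
      AEEqFun.coeFn_mk (sᶜ.indicator f) (f.aestronglyMeasurable.indicator hs.compl)]
      with ω h1 h2 h3 h4
    rw [h1, h2]
    show b₀ ω * b₁ ω = 0
    rw [h3, h4]
    by_cases hω : ω ∈ s
    · rw [Set.indicator_of_notMem (by simpa using hω : ω ∉ sᶜ)]; ring
    · rw [Set.indicator_of_notMem hω]; ring
  exact ⟨b₀, hmem₀, b₁, hmem₁, hsum', hdisj, hn₀, hn₁⟩

/-- `K(t, f) ≤ D(t, f) ≤ 2 K(t, f)` for all `t > 0` and `f ∈ X₀ + X₁`;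
in particular every `f ∈ X₀ + X₁` admits a decomposition `f = a₀ + a₁` with `aⱼ ∈ Xⱼ`
and `a₀ ⬝ a₁ = 0` a.e. -/
theorem Kfun_le_Dfun_le_two_mul_Kfun
    (X₀ X₁ : BanachFunctionLattice Ω μ) (t : ℝ) (ht : 0 < t)
    (f : Ω →ₘ[μ] ℝ) (hf : f ∈ sumSet X₀.toFunctionSpace X₁.toFunctionSpace) :
    (Kfun X₀.toFunctionSpace X₁.toFunctionSpace t f
        ≤ Dfun X₀.toFunctionSpace X₁.toFunctionSpace t f ∧
      Dfun X₀.toFunctionSpace X₁.toFunctionSpace t f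
        ≤ 2 * Kfun X₀.toFunctionSpace X₁.toFunctionSpace t f) ∧
    ∃ a₀ ∈ X₀.carrier, ∃ a₁ ∈ X₁.carrier, f = a₀ + a₁ ∧ a₀ * a₁ = 0 := by
  obtain ⟨a₀, ha₀, a₁, ha₁, hdec⟩ := hf
  set A₀ := X₀.toFunctionSpace
  set A₁ := X₁.toFunctionSpace
  set KS : Set ℝ := {r | ∃ a₀ ∈ A₀.carrier, ∃ a₁ ∈ A₁.carrier,
    f = a₀ + a₁ ∧ r = A₀.norm a₀ + t * A₁.norm a₁} with hKS
  set DS : Set ℝ := {r | ∃ a₀ ∈ A₀.carrier, ∃ a₁ ∈ A₁.carrier,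
    f = a₀ + a₁ ∧ a₀ * a₁ = 0 ∧ r = A₀.norm a₀ + t * A₁.norm a₁} with hDS
  have hKfun : Kfun A₀ A₁ t f = sInf KS := rfl
  have hDfun : Dfun A₀ A₁ t f = sInf DS := rfl
  have hKne : KS.Nonempty := ⟨_, a₀, ha₀, a₁, ha₁, hdec, rfl⟩
  obtain ⟨b₀, hb₀, b₁, hb₁, hbdec, hbdisj, _, _⟩ :=
    disjointify X₀ X₁ f a₀ a₁ ha₀ ha₁ hdec
  have hDne : DS.Nonempty := ⟨_, b₀, hb₀, b₁, hb₁, hbdec, hbdisj, rfl⟩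
  have hKbdd : BddBelow KS := by
    refine ⟨0, fun r hr => ?_⟩
    obtain ⟨c₀, hc₀, c₁, hc₁, _, hr⟩ := hr
    have h0 : (0:ℝ) ≤ A₀.norm c₀ := X₀.norm_nonneg c₀ hc₀
    have h1 : (0:ℝ) ≤ A₁.norm c₁ := X₁.norm_nonneg c₁ hc₁
    have := mul_nonneg ht.le h1
    rw [hr]; linarith
  have hDbdd : BddBelow DS := by
    refine ⟨0, fun r hr => ?_⟩
    obtain ⟨c₀, hc₀, c₁, hc₁, _, _, hr⟩ := hr
    have h0 : (0:ℝ) ≤ A₀.norm c₀ := X₀.norm_nonneg c₀ hc₀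
    have h1 : (0:ℝ) ≤ A₁.norm c₁ := X₁.norm_nonneg c₁ hc₁
    have := mul_nonneg ht.le h1
    rw [hr]; linarith
  have hsub : DS ⊆ KS := by
    rintro r ⟨c₀, hc₀, c₁, hc₁, hd, _, hr⟩
    exact ⟨c₀, hc₀, c₁, hc₁, hd, hr⟩
  constructor
  · constructor
    · rw [hKfun, hDfun]
      exact csInf_le_csInf hKbdd hDne hsub
    · rw [hKfun, hDfun]
      have key : ∀ r ∈ KS, sInf DS ≤ 2 * r := by
        rintro r ⟨c₀, hc₀, c₁, hc₁, hd, hr⟩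
        obtain ⟨d₀, hd₀, d₁, hd₁, hddec, hddisj, hdn₀, hdn₁⟩ :=
          disjointify X₀ X₁ f c₀ c₁ hc₀ hc₁ hd
        have hmem : A₀.norm d₀ + t * A₁.norm d₁ ∈ DS :=
          ⟨d₀, hd₀, d₁, hd₁, hddec, hddisj, rfl⟩
        have h1 : sInf DS ≤ A₀.norm d₀ + t * A₁.norm d₁ := csInf_le hDbdd hmem
        have h2 : t * A₁.norm d₁ ≤ t * (2 * X₁.norm c₁) :=
          mul_le_mul_of_nonneg_left hdn₁ ht.le
        rw [hr]
        calc sInf DS ≤ A₀.norm d₀ + t * A₁.norm d₁ := h1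
          _ ≤ 2 * X₀.norm c₀ + t * (2 * X₁.norm c₁) := add_le_add hdn₀ h2
          _ = 2 * (A₀.norm c₀ + t * A₁.norm c₁) := by
              show 2 * X₀.norm c₀ + t * (2 * X₁.norm c₁)
                  = 2 * (X₀.norm c₀ + t * X₁.norm c₁)
              ring
      have : sInf DS / 2 ≤ sInf KS := by
        apply le_csInf hKne
        intro r hr
        linarith [key r hr]
      linarith
  · exact ⟨b₀, hb₀, b₁, hb₁, hbdec, hbdisj⟩
end
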